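/- Let G be a uniform pro-p group and Z_p[G] the group algebra of the underlying abstract group. The filtration on Z_p[G] induced by the p-valuation ω (whose n-th term A_n is the Z_p-submodule generated by all elements p^l(g_1 − 1)⋯(g_m − 1) with l, m ∈ N, g_i ∈ G and l + ω(g_1) + ⋯ + ω(g_m) ≥ n) coincides with the M_d-adic filtration, i.e. A_n = M_d^n for all n, where M_d = pZ_p[G] + I_d(G) and I_d(G) is the augmentation ideal of Z_p[G]. -/

import Mathlib

/-! Both filtrations are multiplicative. Since `p` has weight one and the augmentation ideal is
spanned by the elements `g - 1` with `ω(g) ≥ 1`, `𝔪_d ⊆ A_1`, whence `𝔪_d^n ⊆ A_n`.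
Conversely, in a uniform group every `g ∈ P_{k+2}` is a `p`-th power `h^p` with `h ∈ P_{k+1}`,
and `g - 1 = ((h - 1) + 1)^p - 1` is `(h - 1)^p` plus `p`-multiples of powers of `h - 1`; by
induction `g - 1 ∈ 𝔪_d^{ω(g)}`, which puts every generator of `A_n` into `𝔪_d^n`. -/

noncomputable section

open scoped Classical

/-- The (topological closure of the) subgroup generated by `q`-th powers of elements of `H`. -/
def Subgroup.qPow {G : Type} [Group G] [TopologicalSpace G] [IsTopologicalGroup G]
    (q : ℕ) (H : Subgroup G) : Subgroup G :=
  (Subgroup.closure ((fun g => g ^ q) '' (H : Set G))).topologicalClosure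

/-- The lower `p`-series of a topological group; `lowerPSeries p G n` is the subgroup
`P_{n+1}(G)`, so that `lowerPSeries p G 0 = P_1(G) = G` and
`P_{i+1}(G) = closure (P_i(G)^p [P_i(G), G])`. -/
def lowerPSeries (p : ℕ) (G : Type) [Group G] [TopologicalSpace G] [IsTopologicalGroup G] :
    ℕ → Subgroup G
  | 0 => ⊤
  | (n + 1) =>
      ((lowerPSeries p G n).qPow p ⊔ ⁅lowerPSeries p G n, (⊤ : Subgroup G)⁆).topologicalClosure

/-- A topological group is topologically finitely generated if some finite subset generates a
dense subgroup. -/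
def IsTopFinitelyGenerated (G : Type) [Group G] [TopologicalSpace G] [IsTopologicalGroup G] :
    Prop :=
  ∃ S : Finset G, (Subgroup.closure (S : Set G)).topologicalClosure = ⊤

/-- The minimal number of topological generators of `G`. -/
def topGenRank (G : Type) [Group G] [TopologicalSpace G] [IsTopologicalGroup G] : ℕ :=
  sInf {n : ℕ | ∃ S : Finset G, S.card = n ∧ (Subgroup.closure (S : Set G)).topologicalClosure = ⊤}

/-- A profinite group which is pro-`p`: it is a compact, Hausdorff, totally disconnected
topological group all of whose continuous finite quotients are `p`-groups. -/
def IsProPGroup (p : ℕ) (G : Type) [Group G] [TopologicalSpace G] : Prop :=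
  IsTopologicalGroup G ∧ CompactSpace G ∧ T2Space G ∧ TotallyDisconnectedSpace G ∧
    ∀ N : OpenNormalSubgroup G, IsPGroup p (G ⧸ N.toSubgroup)

/-- `G` is a powerful pro-`p` group (for odd `p`): `[G,G] ⊆ closure (G^p)`. -/
def IsPowerful (p : ℕ) (G : Type) [Group G] [TopologicalSpace G] [IsTopologicalGroup G] : Prop :=
  ⁅(⊤ : Subgroup G), (⊤ : Subgroup G)⁆ ≤ (⊤ : Subgroup G).qPow p

/-- `G` is an extra-powerful pro-`p` group: `[G,G] ⊆ closure (G^{p²})`. -/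
def IsExtraPowerful (p : ℕ) (G : Type) [Group G] [TopologicalSpace G] [IsTopologicalGroup G] :
    Prop :=
  ⁅(⊤ : Subgroup G), (⊤ : Subgroup G)⁆ ≤ (⊤ : Subgroup G).qPow (p ^ 2)

/-- `G` is a uniform pro-`p` group: a finitely generated powerful pro-`p` group for which
the `p`-power maps `P_i(G) → P_{i+1}(G)` between consecutive terms of the lower `p`-series
are bijective. -/
def IsUniform (p : ℕ) (G : Type) [Group G] [TopologicalSpace G] [IsTopologicalGroup G] : Prop :=
  IsProPGroup p G ∧ IsPowerful p G ∧ IsTopFinitelyGenerated G ∧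
    ∀ n : ℕ, Set.BijOn (fun g => g ^ p)
      (lowerPSeries p G n : Set G) (lowerPSeries p G (n + 1) : Set G)

/-- A compact `p`-adic analytic group, via Lazard's characterisation: a profinite group
containing an open uniform pro-`p` subgroup. -/
def IsCompactPadicAnalytic (p : ℕ) (G : Type) [Group G] [TopologicalSpace G] : Prop :=
  ∃ _ : IsTopologicalGroup G, CompactSpace G ∧ T2Space G ∧ TotallyDisconnectedSpace G ∧
    ∃ H : Subgroup G, IsOpen (H : Set G) ∧ IsUniform p H

/-- `G` has no `p`-torsion. -/
def HasNoPTorsion (p : ℕ) (G : Type) [Group G] : Prop :=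
  ∀ g : G, g ^ p = 1 → g = 1

section RingPowers

variable {Λ : Type} [Ring Λ]

/-- The additive subgroup generated by all products of `n` elements of `S` (for `n = 0` this is
the whole ring, matching the convention `𝔪^0 = Λ`).  When `S` is a two-sided ideal, this is the
`n`-th power of `S`. -/
def AddSubgroup.ringPow (S : AddSubgroup Λ) : ℕ → AddSubgroup Λ
  | 0 => ⊤
  | (n + 1) => AddSubgroup.closure
      {x : Λ | ∃ l : List Λ, l.length = n + 1 ∧ (∀ y ∈ l, y ∈ S) ∧ x = l.prod}

end RingPowers


section GroupAlgebra

variable (p : ℕ) [Fact p.Prime] (G : Type) [Group G] [TopologicalSpace G] [IsTopologicalGroup G]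

/-- The augmentation map `ℤ_p[G] → ℤ_p` of the abstract group algebra. -/
def maAug : MonoidAlgebra ℤ_[p] G →+* ℤ_[p] :=
  MonoidAlgebra.liftNCRingHom (RingHom.id ℤ_[p]) (1 : G →* ℤ_[p]) fun _ _ => Commute.all _ _

/-- The two-sided ideal `𝔪_d = p·ℤ_p[G] + I_d(G)` of the abstract group algebra `ℤ_p[G]`,
where `I_d(G)` is the augmentation ideal; realised as an additive subgroup. -/
def mdIdeal : AddSubgroup (MonoidAlgebra ℤ_[p] G) :=
  (AddMonoidHom.mulLeft ((p : ℕ) : MonoidAlgebra ℤ_[p] G)).range ⊔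
    (RingHom.ker (maAug p G)).toAddSubgroup

/-- Lazard's `p`-valuation `ω : G → ℕ_{>0} ∪ {∞}` attached to the lower `p`-series:
`ω(g) = sup { i  :  g ∈ P_i(G) }` (recall `lowerPSeries p G t = P_{t+1}(G)`). -/
def omegaVal (g : G) : ℕ∞ :=
  sSup {x : ℕ∞ | ∃ t : ℕ, x = (t : ℕ∞) + 1 ∧ g ∈ lowerPSeries p G t}

end GroupAlgebra

section Statement

variable (p : ℕ) [Fact p.Prime] (G : Type) [Group G] [TopologicalSpace G] [IsTopologicalGroup G]

/-- The generating set of the `n`-th term `A_n` of the filtration on `ℤ_p[G]` induced by the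
`p`-valuation `ω`: all elements `p^l (g_1 − 1) ⋯ (g_m − 1)` with
`l + ω(g_1) + ⋯ + ω(g_m) ≥ n`. -/
def omegaFiltGenSet (n : ℕ) : Set (MonoidAlgebra ℤ_[p] G) :=
  {x | ∃ (l : ℕ) (L : List G),
    (n : ℕ∞) ≤ (l : ℕ∞) + (L.map (omegaVal p G)).sum ∧
    x = (p : ℤ_[p]) ^ l • (L.map fun g => MonoidAlgebra.of ℤ_[p] G g - 1).prod}

end Statement

theorem ENat.exists_le_and_sub_le_of_le_add {n : ℕ} {a b : ℕ∞} (h : (n : ℕ∞) ≤ a + b) :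
    ∃ k : ℕ, (k : ℕ∞) ≤ a ∧ ((n - k : ℕ) : ℕ∞) ≤ b := by
  induction a using ENat.recTopCoe with
  | top => exact ⟨n, le_top, by simp⟩
  | coe w =>
    rcases le_total n w with hnw | hnw
    · exact ⟨n, by exact_mod_cast hnw, by simp⟩
    · refine ⟨w, le_rfl, ?_⟩
      rwa [ENat.natCast_sub, tsub_le_iff_left]

section RingPowOfIdeal

variable {Λ : Type} [Ring Λ]

/-- Two-sidedness as a property of an additive subgroup, the form in which `AddSubgroup.ringPow`
takes its argument (Mathlib's `TwoSidedIdeal` is a separate bundled type). -/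
structure AddSubgroup.IsTwoSidedIdeal (S : AddSubgroup Λ) : Prop where
  mul_mem_left : ∀ (a : Λ) {x : Λ}, x ∈ S → a * x ∈ S
  mul_mem_right : ∀ (a : Λ) {x : Λ}, x ∈ S → x * a ∈ S

namespace AddSubgroup

variable {S : AddSubgroup Λ}

theorem list_prod_mem_ringPow {l : List Λ} (h : ∀ y ∈ l, y ∈ S) :
    l.prod ∈ S.ringPow l.length := by
  cases l with
  | nil => trivial
  | cons a t => exact subset_closure ⟨a :: t, rfl, h, rfl⟩

theorem mem_ringPow_one {x : Λ} (hx : x ∈ S) : x ∈ S.ringPow 1 := by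
  simpa using list_prod_mem_ringPow (l := [x]) (by simpa)

theorem IsTwoSidedIdeal.mul_mem_ringPow_left (hS : S.IsTwoSidedIdeal) (a : Λ) {n : ℕ} {x : Λ}
    (hx : x ∈ S.ringPow n) : a * x ∈ S.ringPow n := by
  cases n with
  | zero => trivial
  | succ n =>
    induction hx using closure_induction with
    | mem x hx =>
      obtain ⟨_ | ⟨h, t⟩, hlen, hmem, rfl⟩ := hx
      · simp at hlen
      · rw [List.prod_cons, ← mul_assoc, ← List.prod_cons]
        refine subset_closure ⟨a * h :: t, hlen, ?_, rfl⟩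
        simp only [List.mem_cons, forall_eq_or_imp] at hmem ⊢
        exact ⟨hS.mul_mem_left a hmem.1, hmem.2⟩
    | zero => simp
    | add x y _ _ hx hy => rw [mul_add]; exact add_mem hx hy
    | neg x _ hx => rw [mul_neg]; exact neg_mem hx

theorem IsTwoSidedIdeal.mul_mem_ringPow_right (hS : S.IsTwoSidedIdeal) (a : Λ) {n : ℕ} {x : Λ}
    (hx : x ∈ S.ringPow n) : x * a ∈ S.ringPow n := by
  cases n with
  | zero => trivial
  | succ n =>
    induction hx using closure_induction with
    | mem x hx =>
      obtain ⟨l, hlen, hmem, rfl⟩ := hx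
      rcases List.eq_nil_or_concat l with rfl | ⟨t, h, rfl⟩
      · simp at hlen
      · rw [show (t.concat h).prod * a = (t ++ [h * a]).prod by simp [mul_assoc]]
        refine subset_closure ⟨t ++ [h * a], by simpa using hlen, ?_, rfl⟩
        simp only [List.concat_eq_append, List.mem_append, List.mem_singleton, or_imp,
          forall_and, forall_eq] at hmem ⊢
        exact ⟨hmem.1, hS.mul_mem_right a hmem.2⟩
    | zero => simp
    | add x y _ _ hx hy => rw [add_mul]; exact add_mem hx hy
    | neg x _ hx => rw [neg_mul]; exact neg_mem hx

theorem IsTwoSidedIdeal.mul_mem_ringPow (hS : S.IsTwoSidedIdeal) {i j : ℕ} {x y : Λ}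
    (hx : x ∈ S.ringPow i) (hy : y ∈ S.ringPow j) : x * y ∈ S.ringPow (i + j) := by
  cases i with
  | zero => simpa using hS.mul_mem_ringPow_left x hy
  | succ i =>
    cases j with
    | zero => exact hS.mul_mem_ringPow_right y hx
    | succ j =>
      induction hx using closure_induction with
      | mem x hx =>
        induction hy using closure_induction with
        | mem y hy =>
          obtain ⟨l, hl, hlS, rfl⟩ := hx
          obtain ⟨l', hl', hl'S, rfl⟩ := hy
          rw [← List.prod_append]
          convert list_prod_mem_ringPow (S := S) (l := l ++ l') ?_ using 2
          · simp [hl, hl']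
          · simpa [or_imp, forall_and] using ⟨hlS, hl'S⟩
        | zero => simp
        | add _ _ _ _ h₁ h₂ => rw [mul_add]; exact add_mem h₁ h₂
        | neg _ _ h => rw [mul_neg]; exact neg_mem h
      | zero => simp
      | add _ _ _ _ h₁ h₂ => rw [add_mul]; exact add_mem h₁ h₂
      | neg _ _ h => rw [neg_mul]; exact neg_mem h

theorem IsTwoSidedIdeal.ringPow_antitone (hS : S.IsTwoSidedIdeal) : Antitone S.ringPow := by
  refine antitone_nat_of_succ_le fun n => (closure_le _).2 ?_
  rintro _ ⟨_ | ⟨h, t⟩, hlen, hmem, rfl⟩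
  · simp at hlen
  · rw [List.prod_cons]
    simp only [List.length_cons, Nat.add_right_cancel_iff] at hlen
    exact hS.mul_mem_ringPow_left h (hlen ▸ list_prod_mem_ringPow fun y hy => hmem y (.tail h hy))

theorem IsTwoSidedIdeal.pow_mem_ringPow (hS : S.IsTwoSidedIdeal) {m : ℕ} {x : Λ}
    (hx : x ∈ S.ringPow m) (t : ℕ) : x ^ t ∈ S.ringPow (t * m) := by
  induction t with
  | zero => rw [zero_mul]; trivial
  | succ t ih => simpa [pow_succ, Nat.succ_mul] using hS.mul_mem_ringPow ih hx

theorem IsTwoSidedIdeal.list_prod_mem_ringPow_of_le_sum (hS : S.IsTwoSidedIdeal) {α : Type*}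
    (v : α → ℕ∞) (x : α → Λ) (hx : ∀ a (k : ℕ), (k : ℕ∞) ≤ v a → x a ∈ S.ringPow k)
    (L : List α) {n : ℕ} (hn : (n : ℕ∞) ≤ (L.map v).sum) : (L.map x).prod ∈ S.ringPow n := by
  induction L generalizing n with
  | nil =>
    obtain rfl : n = 0 := by simpa using hn
    trivial
  | cons a L ih =>
    rw [List.map_cons, List.sum_cons] at hn
    obtain ⟨k, hk, hnk⟩ := ENat.exists_le_and_sub_le_of_le_add hn
    rw [List.map_cons, List.prod_cons]
    exact hS.ringPow_antitone le_add_tsub (hS.mul_mem_ringPow (hx a k hk) (ih hnk))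

theorem IsTwoSidedIdeal.add_one_pow_sub_one_mem_ringPow (hS : S.IsTwoSidedIdeal) {p : ℕ}
    (hp : p.Prime) (hpS : (p : Λ) ∈ S) {m : ℕ} (hm : 1 ≤ m) {y : Λ} (hy : y ∈ S.ringPow m) :
    (y + 1) ^ p - 1 ∈ S.ringPow (m + 1) := by
  have hexp : (y + 1) ^ p - 1 = ∑ i ∈ Finset.range p, y ^ (i + 1) * (p.choose (i + 1) : Λ) := by
    rw [(Commute.one_right y).add_pow, Finset.sum_range_succ']
    simp
  rw [hexp]
  refine sum_mem fun i hi => ?_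
  rcases (show i + 1 ≤ p from Finset.mem_range.1 hi).lt_or_eq with hip | hip
  · obtain ⟨c, hc⟩ := hp.dvd_choose_self i.succ_ne_zero hip
    rw [hc, Nat.cast_mul, ← mul_assoc]
    have hyi : y ^ (i + 1) ∈ S.ringPow m :=
      hS.ringPow_antitone (Nat.le_mul_of_pos_left _ i.succ_pos) (hS.pow_mem_ringPow hy (i + 1))
    exact hS.mul_mem_ringPow (hS.mul_mem_ringPow hyi (mem_ringPow_one hpS)) (j := 0) trivial
  · rw [hip, Nat.choose_self, Nat.cast_one, mul_one]
    exact hS.ringPow_antitone (by nlinarith [hp.two_le]) (hS.pow_mem_ringPow hy p)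

end AddSubgroup

end RingPowOfIdeal

section LowerPSeries

variable {p : ℕ} {G : Type} [Group G] [TopologicalSpace G] [IsTopologicalGroup G]

theorem IsUniform.exists_pow_eq (hU : IsUniform p G) {n : ℕ} {g : G}
    (hg : g ∈ lowerPSeries p G (n + 1)) : ∃ h ∈ lowerPSeries p G n, h ^ p = g :=
  (hU.2.2.2 n).surjOn hg

theorem IsUniform.lowerPSeries_antitone (hU : IsUniform p G) : Antitone (lowerPSeries p G) :=
  antitone_nat_of_succ_le fun _ _ hg => by
    obtain ⟨h, hh, rfl⟩ := hU.exists_pow_eq hg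
    exact pow_mem hh p

theorem IsUniform.mem_lowerPSeries_of_le_omegaVal (hU : IsUniform p G) {g : G} {k : ℕ}
    (h : (k + 1 : ℕ∞) ≤ omegaVal p G g) : g ∈ lowerPSeries p G k := by
  obtain ⟨_, ⟨t, rfl, ht⟩, hkt⟩ :=
    lt_sSup_iff.1 (((ENat.lt_add_one_iff (ENat.natCast_ne_top k)).2 le_rfl).trans_le h)
  exact hU.lowerPSeries_antitone (by exact_mod_cast Order.le_of_lt_add_one hkt) ht

theorem one_le_omegaVal (g : G) : 1 ≤ omegaVal p G g :=
  le_sSup ⟨0, by simp, Subgroup.mem_top g⟩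

end LowerPSeries

section GroupAlgebra

variable {p : ℕ} [Fact p.Prime] {G : Type} [Group G]

local notation "ℤ_[p][G]" => MonoidAlgebra ℤ_[p] G

theorem maAug_single (g : G) (c : ℤ_[p]) : maAug p G (MonoidAlgebra.single g c) = c := by
  simp [maAug, MonoidAlgebra.liftNCRingHom, MonoidAlgebra.liftNC_single]

theorem maAug_of (g : G) : maAug p G (MonoidAlgebra.of ℤ_[p] G g) = 1 :=
  maAug_single g 1

theorem sub_algebraMap_maAug_mem_span (x : ℤ_[p][G]) :
    x - algebraMap ℤ_[p] ℤ_[p][G] (maAug p G x) ∈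
      Submodule.span ℤ_[p] (Set.range fun g => MonoidAlgebra.of ℤ_[p] G g - 1) := by
  induction x using MonoidAlgebra.induction_linear with
  | zero => simp
  | add x y hx hy =>
    rw [map_add, map_add, add_sub_add_comm]
    exact add_mem hx hy
  | single g c =>
    rw [maAug_single, Algebra.algebraMap_eq_smul_one, ← mul_one c, ← MonoidAlgebra.smul_single',
      mul_one, ← MonoidAlgebra.of_apply, ← smul_sub]
    exact Submodule.smul_mem _ c (Submodule.subset_span ⟨g, rfl⟩)

theorem mdIdeal_isTwoSidedIdeal : (mdIdeal p G).IsTwoSidedIdeal := by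
  have mem_mdIdeal (c z : ℤ_[p][G]) (hz : maAug p G z = 0) :
      (p : ℤ_[p][G]) * c + z ∈ mdIdeal p G :=
    AddSubgroup.add_mem_sup ⟨c, rfl⟩ hz
  constructor <;> intro a x hx <;>
    obtain ⟨_, ⟨c, rfl⟩, z, hz, rfl⟩ := AddSubgroup.mem_sup.1 hx <;>
    replace hz : maAug p G z = 0 := hz
  · rw [AddMonoidHom.coe_mulLeft, mul_add, ← mul_assoc, ← (Nat.cast_commute p a).eq, mul_assoc]
    exact mem_mdIdeal _ _ (by rw [map_mul, hz, mul_zero])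
  · rw [AddMonoidHom.coe_mulLeft, add_mul, mul_assoc]
    exact mem_mdIdeal _ _ (by rw [map_mul, hz, zero_mul])

theorem natCast_mem_mdIdeal : (p : ℤ_[p][G]) ∈ mdIdeal p G :=
  AddSubgroup.mem_sup_left ⟨1, mul_one _⟩

theorem of_sub_one_mem_mdIdeal (g : G) : MonoidAlgebra.of ℤ_[p] G g - 1 ∈ mdIdeal p G :=
  AddSubgroup.mem_sup_right (show maAug p G _ = 0 by rw [map_sub, maAug_of, map_one, sub_self])

end GroupAlgebra

section OmegaFiltration

variable (p : ℕ) [Fact p.Prime] (G : Type) [Group G] [TopologicalSpace G] [IsTopologicalGroup G]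

def omegaFiltration (n : ℕ) : Submodule ℤ_[p] (MonoidAlgebra ℤ_[p] G) :=
  Submodule.span ℤ_[p] (omegaFiltGenSet p G n)

variable {p G}

open scoped Pointwise

local notation "ℤ_[p][G]" => MonoidAlgebra ℤ_[p] G

theorem omegaFiltGenSet_mul_subset (i j : ℕ) :
    omegaFiltGenSet p G i * omegaFiltGenSet p G j ⊆ omegaFiltGenSet p G (i + j) := by
  refine Set.mul_subset_iff.2 ?_
  rintro _ ⟨l, L, hi, rfl⟩ _ ⟨l', L', hj, rfl⟩
  refine ⟨l + l', L ++ L', ?_, ?_⟩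
  · simpa [add_add_add_comm] using add_le_add hi hj
  · rw [smul_mul_smul_comm, ← pow_add, List.map_append, List.prod_append]

theorem omegaFiltration_mul_le (i j : ℕ) :
    omegaFiltration p G i * omegaFiltration p G j ≤ omegaFiltration p G (i + j) := by
  rw [omegaFiltration, omegaFiltration, Submodule.span_mul_span]
  exact Submodule.span_mono (omegaFiltGenSet_mul_subset i j)

theorem span_of_sub_one_le_omegaFiltration {n : ℕ} (hn : n ≤ 1) :
    Submodule.span ℤ_[p] (Set.range fun g => MonoidAlgebra.of ℤ_[p] G g - 1) ≤
      omegaFiltration p G n := by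
  refine Submodule.span_le.2 (Set.range_subset_iff.2 fun g => Submodule.subset_span ?_)
  exact ⟨0, [g], by simpa using (Nat.cast_le.2 hn).trans (one_le_omegaVal g), by simp⟩

theorem mem_omegaFiltration_zero (x : ℤ_[p][G]) : x ∈ omegaFiltration p G 0 := by
  rw [← sub_add_cancel x (algebraMap ℤ_[p] ℤ_[p][G] (maAug p G x))]
  refine add_mem
    (span_of_sub_one_le_omegaFiltration zero_le_one (sub_algebraMap_maAug_mem_span x)) ?_
  rw [Algebra.algebraMap_eq_smul_one]
  exact Submodule.smul_mem _ _ (Submodule.subset_span ⟨0, [], by simp, by simp⟩)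

theorem mdIdeal_le_omegaFiltration_one {x : ℤ_[p][G]} (hx : x ∈ mdIdeal p G) :
    x ∈ omegaFiltration p G 1 := by
  obtain ⟨_, ⟨c, rfl⟩, z, hz, rfl⟩ := AddSubgroup.mem_sup.1 hx
  replace hz : maAug p G z = 0 := hz
  have hp : (p : ℤ_[p][G]) ∈ omegaFiltration p G 1 :=
    Submodule.subset_span ⟨1, [], by simp, by simp [Algebra.smul_def]⟩
  refine add_mem
    (omegaFiltration_mul_le 1 0 (Submodule.mul_mem_mul hp (mem_omegaFiltration_zero c))) ?_
  simpa [hz] using span_of_sub_one_le_omegaFiltration le_rfl (sub_algebraMap_maAug_mem_span z)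

theorem list_prod_mem_omegaFiltration {l : List ℤ_[p][G]}
    (h : ∀ y ∈ l, y ∈ omegaFiltration p G 1) : l.prod ∈ omegaFiltration p G l.length := by
  induction l with
  | nil => exact mem_omegaFiltration_zero 1
  | cons a l ih =>
    rw [List.prod_cons, List.length_cons, add_comm]
    simp only [List.mem_cons, forall_eq_or_imp] at h
    exact omegaFiltration_mul_le 1 _ (Submodule.mul_mem_mul h.1 (ih h.2))

theorem ringPow_subset_omegaFiltration (n : ℕ) :
    ((mdIdeal p G).ringPow n : Set ℤ_[p][G]) ⊆ omegaFiltration p G n := by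
  cases n with
  | zero => exact fun x _ => mem_omegaFiltration_zero x
  | succ n =>
    refine (AddSubgroup.closure_le (omegaFiltration p G (n + 1)).toAddSubgroup).2 ?_
    rintro _ ⟨l, hl, hlS, rfl⟩
    exact hl ▸ list_prod_mem_omegaFiltration fun y hy =>
      mdIdeal_le_omegaFiltration_one (hlS y hy)

end OmegaFiltration

section Uniform

variable {p : ℕ} [Fact p.Prime] {G : Type} [Group G] [TopologicalSpace G] [IsTopologicalGroup G]

local notation "ℤ_[p][G]" => MonoidAlgebra ℤ_[p] G

theorem IsUniform.of_sub_one_mem_ringPow (hU : IsUniform p G) {k : ℕ} {g : G}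
    (hg : g ∈ lowerPSeries p G k) :
    MonoidAlgebra.of ℤ_[p] G g - 1 ∈ (mdIdeal p G).ringPow (k + 1) := by
  induction k generalizing g with
  | zero => exact AddSubgroup.mem_ringPow_one (of_sub_one_mem_mdIdeal g)
  | succ k ih =>
    obtain ⟨h, hh, rfl⟩ := hU.exists_pow_eq hg
    rw [map_pow, ← sub_add_cancel (MonoidAlgebra.of ℤ_[p] G h) 1]
    exact mdIdeal_isTwoSidedIdeal.add_one_pow_sub_one_mem_ringPow Fact.out natCast_mem_mdIdeal
      k.succ_pos (ih hh)

theorem IsUniform.of_sub_one_mem_ringPow_of_le_omegaVal (hU : IsUniform p G) {g : G} {k : ℕ}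
    (hk : (k : ℕ∞) ≤ omegaVal p G g) :
    MonoidAlgebra.of ℤ_[p] G g - 1 ∈ (mdIdeal p G).ringPow k := by
  cases k with
  | zero => trivial
  | succ k =>
    exact hU.of_sub_one_mem_ringPow (hU.mem_lowerPSeries_of_le_omegaVal (by exact_mod_cast hk))

theorem IsUniform.omegaFiltGenSet_subset_ringPow (hU : IsUniform p G) (n : ℕ) :
    omegaFiltGenSet p G n ⊆ (mdIdeal p G).ringPow n := by
  have hS : (mdIdeal p G).IsTwoSidedIdeal := mdIdeal_isTwoSidedIdeal
  rintro _ ⟨l, L, hn, rfl⟩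
  have hL := hS.list_prod_mem_ringPow_of_le_sum (omegaVal p G) _
    (fun g _ => hU.of_sub_one_mem_ringPow_of_le_omegaVal) L (n := n - l)
    (by rwa [ENat.natCast_sub, tsub_le_iff_left])
  have hpl := hS.pow_mem_ringPow (AddSubgroup.mem_ringPow_one natCast_mem_mdIdeal) l
  rw [SetLike.mem_coe, Algebra.smul_def, map_pow, map_natCast]
  exact hS.ringPow_antitone (by rw [mul_one]; exact le_add_tsub) (hS.mul_mem_ringPow hpl hL)

theorem IsUniform.omegaFiltration_subset_ringPow (hU : IsUniform p G) (n : ℕ) :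
    (omegaFiltration p G n : Set ℤ_[p][G]) ⊆ (mdIdeal p G).ringPow n := by
  intro x hx
  induction hx using Submodule.span_induction with
  | mem x hx => exact hU.omegaFiltGenSet_subset_ringPow n hx
  | zero => exact zero_mem _
  | add _ _ _ _ hx hy => exact add_mem hx hy
  | smul c x _ hx =>
    rw [Algebra.smul_def]
    exact mdIdeal_isTwoSidedIdeal.mul_mem_ringPow_left _ hx

end Uniform

section Statement

variable (p : ℕ) [Fact p.Prime] (G : Type) [Group G] [TopologicalSpace G] [IsTopologicalGroup G]

/-- **Statement 2.** Let `G` be a uniform pro-`p` group and `ℤ_p[G]` the group algebra of the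
underlying abstract group.  The filtration on `ℤ_p[G]` induced by the `p`-valuation `ω` (whose
`n`-th term `A_n` is the `ℤ_p`-submodule generated by all elements `p^l (g_1 − 1) ⋯ (g_m − 1)`
with `l, m ∈ ℕ`, `g_i ∈ G` and `l + ω(g_1) + ⋯ + ω(g_m) ≥ n`) coincides with the `𝔪_d`-adic
filtration, i.e. `A_n = 𝔪_d^n` for all `n`, where `𝔪_d = p·ℤ_p[G] + I_d(G)` and `I_d(G)` is the
augmentation ideal of `ℤ_p[G]`. -/
theorem omega_filtration_eq_md_adic (hU : IsUniform p G) :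
    ∀ n : ℕ,
      (Submodule.span ℤ_[p] (omegaFiltGenSet p G n) : Set (MonoidAlgebra ℤ_[p] G)) =
        ((mdIdeal p G).ringPow n : Set (MonoidAlgebra ℤ_[p] G)) := fun n =>
  (hU.omegaFiltration_subset_ringPow n).antisymm (ringPow_subset_omegaFiltration n)

end Statement
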